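/- arXiv:1912.13160 — 3 statements merged into one kernel-verified Lean document; each statement's English description precedes it below -/
import Mathlib

section
/- Let (L, U, η, ε) be a comonoidal adjunction between monoidal categories C and D (i.e., L : C → D and U : D → C are comonoidal functors and the unit η and counit ε are comonoidal natural transformations), and let V be another monoidal category. Then for any comonoidal functors F : C → V and G : D → V, the category W_ℓ(F∘U, G) of objects M of V equipped with natural transformations M ⊗ F(U(-)) → G(-) ⊗ M compatible with the comonoidal structures is isomorphic to the category W_ℓ(F, G∘L). -/
/-!
An object `(M, ρ)` of `W_ℓ(F ∘ U, G)` gives `(M, X ↦ (M ◁ F η_X) ≫ ρ_{L X})` in `W_ℓ(F, G ∘ L)`,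
and `(M, σ)` in the latter gives `(M, Y ↦ σ_{U Y} ≫ (G ε_Y ▷ M))` in the former.  Each is a
restriction along a comonoidal functor followed by composition with a comonoidal natural
transformation, and both operations preserve compatibility with `δ` and `η`.  By naturality,
the round trips compose `ρ` with `F (U ε_Y ∘ η_{U Y})` and `σ` with `G (ε_{L X} ∘ L η_X)`,
which are identities by the triangle identities; objects `M` and morphisms never change.
-/

namespace Stmt0

open CategoryTheory MonoidalCategory CategoryTheory.Functor
open CategoryTheory.Functor.OplaxMonoidal

universe v₁ v₂ v₃ u₁ u₂ u₃

variable {B : Type u₁} [Category.{v₁} B] [MonoidalCategory B]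
variable {V : Type u₂} [Category.{v₂} V] [MonoidalCategory V]

/-- The objects of the category `W_ℓ(F, G)`. -/
structure WLeftObj (F G : B ⥤ V) [F.OplaxMonoidal] [G.OplaxMonoidal] where
  M : V
  ρ : ∀ X : B, M ⊗ F.obj X ⟶ G.obj X ⊗ M
  naturality : ∀ {X Y : B} (f : X ⟶ Y),
    (M ◁ F.map f) ≫ ρ Y = ρ X ≫ (G.map f ▷ M)
  compat_tensor : ∀ X Y : B,
    ρ (X ⊗ Y) ≫ (δ G X Y ▷ M) =
      (M ◁ δ F X Y) ≫ (α_ M (F.obj X) (F.obj Y)).inv ≫ (ρ X ▷ F.obj Y) ≫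
        (α_ (G.obj X) M (F.obj Y)).hom ≫ (G.obj X ◁ ρ Y) ≫
        (α_ (G.obj X) (G.obj Y) M).inv
  compat_unit :
    ρ (𝟙_ B) ≫ (η G ▷ M) ≫ (λ_ M).hom = (M ◁ η F) ≫ (ρ_ M).hom

@[ext]
structure WLeftHom {F G : B ⥤ V} [F.OplaxMonoidal] [G.OplaxMonoidal]
    (P Q : WLeftObj F G) where
  f : P.M ⟶ Q.M
  comm : ∀ X : B, (f ▷ F.obj X) ≫ Q.ρ X = P.ρ X ≫ (G.obj X ◁ f)

instance wleftCategory (F G : B ⥤ V) [F.OplaxMonoidal] [G.OplaxMonoidal] :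
    Category (WLeftObj F G) where
  Hom P Q := WLeftHom P Q
  id P := ⟨𝟙 P.M, by intro X; simp⟩
  comp {P Q R} u v := ⟨u.f ≫ v.f, by
    intro X
    simp only [comp_whiskerRight, MonoidalCategory.whiskerLeft_comp, Category.assoc]
    rw [v.comm X, reassoc_of% (u.comm X)]⟩
  id_comp u := by apply WLeftHom.ext; simp
  comp_id u := by apply WLeftHom.ext; simp
  assoc u v w := by apply WLeftHom.ext; simp

def IsComonoidalNT {C D : Type*} [Category C] [Category D]
    [MonoidalCategory C] [MonoidalCategory D]
    {F G : C ⥤ D} [F.OplaxMonoidal] [G.OplaxMonoidal] (τ : F ⟶ G) : Prop :=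
  (∀ X Y : C, τ.app (X ⊗ Y) ≫ δ G X Y = δ F X Y ≫ (τ.app X ⊗ₘ τ.app Y)) ∧
  (τ.app (𝟙_ C) ≫ OplaxMonoidal.η G = OplaxMonoidal.η F)

variable {C : Type u₃} [Category.{v₃} C] [MonoidalCategory C]
variable {D : Type u₁} [Category.{v₁} D] [MonoidalCategory D]

def twistTensor {M a b c d : V} (ρ : M ⊗ a ⟶ b ⊗ M) (σ : M ⊗ c ⟶ d ⊗ M) :
    M ⊗ (a ⊗ c) ⟶ (b ⊗ d) ⊗ M :=
  (α_ M a c).inv ≫ (ρ ▷ c) ≫ (α_ b M c).hom ≫ (b ◁ σ) ≫ (α_ b d M).inv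

theorem whiskerLeft_tensorHom_twistTensor {M a a' b c c' d : V} (f : a ⟶ a') (g : c ⟶ c')
    (ρ : M ⊗ a' ⟶ b ⊗ M) (σ : M ⊗ c' ⟶ d ⊗ M) :
    (M ◁ (f ⊗ₘ g)) ≫ twistTensor ρ σ = twistTensor ((M ◁ f) ≫ ρ) ((M ◁ g) ≫ σ) := by
  simp only [twistTensor, MonoidalCategory.tensorHom_def, MonoidalCategory.whiskerLeft_comp,
    comp_whiskerRight, Category.assoc, associator_inv_naturality_middle_assoc,
    associator_inv_naturality_right_assoc, whisker_exchange_assoc,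
    associator_naturality_right_assoc]

theorem twistTensor_tensorHom_whiskerRight {M a b b' c d d' : V} (ρ : M ⊗ a ⟶ b ⊗ M)
    (σ : M ⊗ c ⟶ d ⊗ M) (f : b ⟶ b') (g : d ⟶ d') :
    twistTensor ρ σ ≫ ((f ⊗ₘ g) ▷ M) = twistTensor (ρ ≫ (f ▷ M)) (σ ≫ (g ▷ M)) := by
  simp only [twistTensor, MonoidalCategory.tensorHom_def, MonoidalCategory.whiskerLeft_comp,
    comp_whiskerRight, Category.assoc]
  rw [← associator_inv_naturality_left_assoc, whisker_exchange_assoc,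
    ← associator_naturality_left_assoc, ← associator_inv_naturality_middle]

namespace IsComonoidalNT

variable {A : Type*} [Category A] [MonoidalCategory A] {F G : A ⥤ B}
  [F.OplaxMonoidal] [G.OplaxMonoidal] {τ : F ⟶ G}

theorem app_tensor_comp_δ (hτ : IsComonoidalNT τ) (X Y : A) :
    τ.app (X ⊗ Y) ≫ δ G X Y = δ F X Y ≫ (τ.app X ⊗ₘ τ.app Y) :=
  hτ.1 X Y

theorem app_unit_comp_η (hτ : IsComonoidalNT τ) : τ.app (𝟙_ A) ≫ η G = η F :=
  hτ.2

end IsComonoidalNT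

attribute [ext] WLeftObj

namespace WLeftObj

variable {A : Type*} [Category A] [MonoidalCategory A]
variable {F G : B ⥤ V} [F.OplaxMonoidal] [G.OplaxMonoidal]

theorem ρ_tensor (P : WLeftObj F G) (X Y : B) :
    P.ρ (X ⊗ Y) ≫ (δ G X Y ▷ P.M) = (P.M ◁ δ F X Y) ≫ twistTensor (P.ρ X) (P.ρ Y) :=
  P.compat_tensor X Y

variable (F G) in
def forget : WLeftObj F G ⥤ V where
  obj P := P.M
  map u := u.f

theorem functor_eq_id {H : WLeftObj F G ⥤ WLeftObj F G} (hobj : ∀ P, H.obj P = P)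
    (hforget : H ⋙ forget F G = forget F G) : H = 𝟭 _ := by
  refine CategoryTheory.Functor.ext hobj fun P Q u => WLeftHom.ext ?_
  change _ = (forget F G).map (eqToHom _ ≫ u ≫ eqToHom _)
  simp only [Functor.map_comp, eqToHom_map]
  exact Functor.congr_hom hforget u

def restrict (K : A ⥤ B) [K.OplaxMonoidal] : WLeftObj F G ⥤ WLeftObj (K ⋙ F) (K ⋙ G) where
  obj P :=
    { M := P.M
      ρ X := P.ρ (K.obj X)
      naturality f := P.naturality (K.map f)
      compat_tensor X Y := by
        simp only [Functor.comp_obj, comp_δ, comp_whiskerRight,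
          MonoidalCategory.whiskerLeft_comp, Category.assoc]
        rw [← reassoc_of% (P.naturality (δ K X Y)), P.ρ_tensor]
        rfl
      compat_unit := by
        simp only [Functor.comp_obj, comp_η, comp_whiskerRight,
          MonoidalCategory.whiskerLeft_comp, Category.assoc]
        rw [← reassoc_of% (P.naturality (η K)), P.compat_unit] }
  map u :=
    { f := u.f
      comm X := u.comm (K.obj X) }

def precomp {F' : B ⥤ V} [F'.OplaxMonoidal] (τ : F' ⟶ F) (hτ : IsComonoidalNT τ) :
    WLeftObj F G ⥤ WLeftObj F' G where
  obj P :=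
    { M := P.M
      ρ X := (P.M ◁ τ.app X) ≫ P.ρ X
      naturality f := by
        rw [← MonoidalCategory.whiskerLeft_comp_assoc, τ.naturality,
          MonoidalCategory.whiskerLeft_comp_assoc, P.naturality, Category.assoc]
      compat_tensor X Y := by
        rw [Category.assoc, P.ρ_tensor, ← MonoidalCategory.whiskerLeft_comp_assoc,
          hτ.app_tensor_comp_δ, MonoidalCategory.whiskerLeft_comp_assoc,
          whiskerLeft_tensorHom_twistTensor]
        rfl
      compat_unit := by
        rw [Category.assoc, P.compat_unit, ← MonoidalCategory.whiskerLeft_comp_assoc,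
          hτ.app_unit_comp_η] }
  map u :=
    { f := u.f
      comm X := by
        dsimp only
        rw [← whisker_exchange_assoc, u.comm, Category.assoc] }

def postcomp {G' : B ⥤ V} [G'.OplaxMonoidal] (σ : G ⟶ G') (hσ : IsComonoidalNT σ) :
    WLeftObj F G ⥤ WLeftObj F G' where
  obj P :=
    { M := P.M
      ρ X := P.ρ X ≫ (σ.app X ▷ P.M)
      naturality f := by
        rw [reassoc_of% (P.naturality f), ← comp_whiskerRight, σ.naturality,
          comp_whiskerRight, Category.assoc]
      compat_tensor X Y := by
        rw [Category.assoc, ← comp_whiskerRight, hσ.app_tensor_comp_δ, comp_whiskerRight,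
          reassoc_of% (P.ρ_tensor X Y), twistTensor_tensorHom_whiskerRight]
        rfl
      compat_unit := by
        rw [Category.assoc, ← comp_whiskerRight_assoc, hσ.app_unit_comp_η, P.compat_unit] }
  map u :=
    { f := u.f
      comm X := by
        dsimp only
        rw [reassoc_of% (u.comm X), whisker_exchange, Category.assoc] }

end WLeftObj

section Adjunction

variable {L : C ⥤ D} {U : D ⥤ C} [L.OplaxMonoidal] [U.OplaxMonoidal]

theorem IsComonoidalNT.whiskerRight_unit {τ : 𝟭 C ⟶ L ⋙ U} (hτ : IsComonoidalNT τ)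
    (F : C ⥤ V) [F.OplaxMonoidal] :
    IsComonoidalNT (F := F) (G := L ⋙ U ⋙ F) (Functor.whiskerRight τ F) := by
  constructor
  · intro X Y
    have h := hτ.app_tensor_comp_δ X Y
    simp only [Functor.comp_obj, comp_δ, id_δ, Functor.id_obj, Category.id_comp] at h
    simp only [Functor.comp_obj, Functor.whiskerRight_app, comp_δ, Functor.comp_map]
    rw [← F.map_comp_assoc, ← F.map_comp_assoc, Category.assoc, h, δ_natural]
  · have h := hτ.app_unit_comp_η
    simp only [Functor.comp_obj, comp_η, id_η] at h
    simp only [Functor.comp_obj, Functor.whiskerRight_app, comp_η, Functor.comp_map]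
    rw [← F.map_comp_assoc, ← F.map_comp_assoc, Category.assoc, h, F.map_id,
      Category.id_comp]

theorem IsComonoidalNT.whiskerRight_counit {τ : U ⋙ L ⟶ 𝟭 D} (hτ : IsComonoidalNT τ)
    (G : D ⥤ V) [G.OplaxMonoidal] :
    IsComonoidalNT (F := U ⋙ L ⋙ G) (G := G) (Functor.whiskerRight τ G) := by
  constructor
  · intro X Y
    have h := hτ.app_tensor_comp_δ X Y
    simp only [Functor.comp_obj, comp_δ, id_δ, Functor.id_obj, Category.comp_id] at h
    simp only [Functor.comp_obj, Functor.whiskerRight_app, comp_δ, Functor.comp_map,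
      Category.assoc, δ_natural, h, Functor.map_comp, Functor.id_obj]
  · have h := hτ.app_unit_comp_η
    simp only [Functor.comp_obj, comp_η, id_η, Category.comp_id] at h
    simp only [Functor.comp_obj, Functor.whiskerRight_app, comp_η, Functor.comp_map, h,
      Functor.map_comp, Category.assoc]

variable (adj : L ⊣ U) {F : C ⥤ V} {G : D ⥤ V} [F.OplaxMonoidal] [G.OplaxMonoidal]

def WLeftObj.transpose (hunit : IsComonoidalNT (F := 𝟭 C) (G := L ⋙ U) adj.unit) :
    WLeftObj (U ⋙ F) G ⥤ WLeftObj F (L ⋙ G) :=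
  WLeftObj.restrict L ⋙ WLeftObj.precomp _ (hunit.whiskerRight_unit F)

def WLeftObj.transposeInv (hcounit : IsComonoidalNT (F := U ⋙ L) (G := 𝟭 D) adj.counit) :
    WLeftObj F (L ⋙ G) ⥤ WLeftObj (U ⋙ F) G :=
  WLeftObj.restrict U ⋙ WLeftObj.postcomp _ (hcounit.whiskerRight_counit G)

theorem WLeftObj.transpose_comp_transposeInv
    (hunit : IsComonoidalNT (F := 𝟭 C) (G := L ⋙ U) adj.unit)
    (hcounit : IsComonoidalNT (F := U ⋙ L) (G := 𝟭 D) adj.counit) :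
    transpose (F := F) (G := G) adj hunit ⋙ transposeInv adj hcounit = 𝟭 _ := by
  refine functor_eq_id (fun P => WLeftObj.ext rfl (heq_of_eq (funext fun X => ?_))) rfl
  have h := P.naturality (adj.counit.app X)
  dsimp only [transpose, transposeInv, restrict, precomp, postcomp, Functor.comp_obj,
    Functor.comp_map, Functor.id_obj, Functor.whiskerRight_app] at h ⊢
  rw [Category.assoc, ← h, ← MonoidalCategory.whiskerLeft_comp_assoc, ← F.map_comp,
    adj.right_triangle_components, F.map_id, MonoidalCategory.whiskerLeft_id, Category.id_comp]

theorem WLeftObj.transposeInv_comp_transpose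
    (hunit : IsComonoidalNT (F := 𝟭 C) (G := L ⋙ U) adj.unit)
    (hcounit : IsComonoidalNT (F := U ⋙ L) (G := 𝟭 D) adj.counit) :
    transposeInv (F := F) (G := G) adj hcounit ⋙ transpose adj hunit = 𝟭 _ := by
  refine functor_eq_id (fun Q => WLeftObj.ext rfl (heq_of_eq (funext fun X => ?_))) rfl
  have h := Q.naturality (adj.unit.app X)
  dsimp only [transpose, transposeInv, restrict, precomp, postcomp, Functor.comp_obj,
    Functor.comp_map, Functor.id_obj, Functor.whiskerRight_app] at h ⊢
  rw [reassoc_of% h, ← comp_whiskerRight, ← G.map_comp, adj.left_triangle_components,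
    G.map_id, MonoidalCategory.id_whiskerRight, Category.comp_id]

end Adjunction

/-- Let `(L, U, η, ε) : C → D` be a comonoidal adjunction, and let
`F : C ⥤ V` and `G : D ⥤ V` be comonoidal functors.  Then there is an isomorphism of
categories `W_ℓ(F ∘ U, G) ≅ W_ℓ(F, G ∘ L)`. -/
theorem wleft_iso_of_comonoidal_adjunction
    (L : C ⥤ D) (U : D ⥤ C) [L.OplaxMonoidal] [U.OplaxMonoidal]
    (adj : L ⊣ U)
    (hunit : IsComonoidalNT (F := 𝟭 C) (G := L ⋙ U) adj.unit)
    (hcounit : IsComonoidalNT (F := U ⋙ L) (G := 𝟭 D) adj.counit)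
    (F : C ⥤ V) (G : D ⥤ V) [F.OplaxMonoidal] [G.OplaxMonoidal] :
    ∃ (Φ : WLeftObj (U ⋙ F) G ⥤ WLeftObj F (L ⋙ G))
      (Ψ : WLeftObj F (L ⋙ G) ⥤ WLeftObj (U ⋙ F) G),
      Φ ⋙ Ψ = 𝟭 _ ∧ Ψ ⋙ Φ = 𝟭 _ :=
  ⟨_, _, WLeftObj.transpose_comp_transposeInv adj hunit hcounit,
    WLeftObj.transposeInv_comp_transpose adj hunit hcounit⟩

end Stmt0
end

section
/- Let (D, ω) be a construction data over a monoidal category V with cocontinuous tensor product and suppose V is complete. Then the bimonad T(M) = ∫^{x∈D} ω(x) ⊗ M ⊗ ω(x)^∨ admits a right adjoint, given by the end T^♮(M) = ∫_{x∈D} ω(x)^∨ ⊗ M ⊗ ω(x). -/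
namespace CData

open CategoryTheory MonoidalCategory CategoryTheory.Functor

universe v₁ v₂ u₁ u₂

variable {D : Type u₁} [Category.{v₁} D] [MonoidalCategory D]
variable {V : Type u₂} [Category.{v₂} V] [MonoidalCategory V]

/-- A construction data over `V`: a (essentially small) monoidal category `D`, a strong
monoidal functor `ω : D ⥤ V` such that every `ω x` has a right dual `dual x` (in the
convention `ev : ω x ⊗ (ω x)^∨ ⟶ 𝟙`, `coev : 𝟙 ⟶ (ω x)^∨ ⊗ ω x`), together with a choice
of the coends `T M = ∫^{x} ω x ⊗ M ⊗ (ω x)^∨`, packaged via their universal property.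
It also records the transpose `dmap` of morphisms and the comparison maps `d0`, `d2`
expressing the monoidality of the right duality functor. -/
structure ConstructionData (ω : D ⥤ V) [ω.Monoidal] where
  dual : D → V
  ev : ∀ x : D, ω.obj x ⊗ dual x ⟶ 𝟙_ V
  coev : ∀ x : D, 𝟙_ V ⟶ dual x ⊗ ω.obj x
  zig : ∀ x : D,
    (ρ_ (ω.obj x)).inv ≫ (ω.obj x ◁ coev x) ≫ (α_ (ω.obj x) (dual x) (ω.obj x)).inv ≫
      (ev x ▷ ω.obj x) ≫ (λ_ (ω.obj x)).hom = 𝟙 (ω.obj x)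
  zag : ∀ x : D,
    (λ_ (dual x)).inv ≫ (coev x ▷ dual x) ≫ (α_ (dual x) (ω.obj x) (dual x)).hom ≫
      (dual x ◁ ev x) ≫ (ρ_ (dual x)).hom = 𝟙 (dual x)
  /-- the transpose `ω(f)^∨ : dual y ⟶ dual x` of `ω f` -/
  dmap : ∀ {x y : D}, (x ⟶ y) → (dual y ⟶ dual x)
  dmap_spec : ∀ {x y : D} (f : x ⟶ y),
    dmap f = (λ_ (dual y)).inv ≫ (coev x ▷ dual y) ≫
      (α_ (dual x) (ω.obj x) (dual y)).hom ≫ (dual x ◁ (ω.map f ▷ dual y)) ≫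
      (dual x ◁ ev y) ≫ (ρ_ (dual x)).hom
  /-- the comparison `ϑ₀`-type map `𝟙 ⟶ (ω 𝟙)^∨`, i.e. `ω̌₀` -/
  d0 : 𝟙_ V ⟶ dual (𝟙_ D)
  d0_spec : (LaxMonoidal.ε ω ⊗ₘ d0) ≫ ev (𝟙_ D) = (λ_ (𝟙_ V)).hom
  /-- the comparison map `ω̌² : (ω y)^∨ ⊗ (ω x)^∨ ⟶ (ω (x ⊗ y))^∨` -/
  d2 : ∀ x y : D, dual y ⊗ dual x ⟶ dual (x ⊗ y)
  d2_spec : ∀ x y : D,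
    (LaxMonoidal.μ ω x y ▷ (dual y ⊗ dual x)) ≫ (ω.obj (x ⊗ y) ◁ d2 x y) ≫ ev (x ⊗ y) =
      (α_ (ω.obj x) (ω.obj y) (dual y ⊗ dual x)).hom ≫
        (ω.obj x ◁ (α_ (ω.obj y) (dual y) (dual x)).inv) ≫
        (ω.obj x ◁ (ev y ▷ dual x)) ≫ (ω.obj x ◁ (λ_ (dual x)).hom) ≫ ev x
  /-- the coend `T M = ∫^{x ∈ D} ω x ⊗ M ⊗ (ω x)^∨` -/
  T : V ⥤ V
  /-- the universal dinatural transformation -/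
  i : ∀ (x : D) (M : V), (ω.obj x ⊗ M) ⊗ dual x ⟶ T.obj M
  dinat : ∀ {x y : D} (f : x ⟶ y) (M : V),
    ((ω.map f ▷ M) ▷ dual y) ≫ i y M = ((ω.obj x ⊗ M) ◁ dmap f) ≫ i x M
  nat : ∀ (x : D) {M N : V} (g : M ⟶ N),
    ((ω.obj x ◁ g) ▷ dual x) ≫ i x N = i x M ≫ T.map g
  universal : ∀ (M N : V) (f : ∀ x : D, (ω.obj x ⊗ M) ⊗ dual x ⟶ N),
    (∀ {x y : D} (h : x ⟶ y),
      ((ω.map h ▷ M) ▷ dual y) ≫ f y = ((ω.obj x ⊗ M) ◁ dmap h) ≫ f x) →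
    ∃! g : T.obj M ⟶ N, ∀ x : D, i x M ≫ g = f x

variable {ω : D ⥤ V} [ω.Monoidal]

/-- The axioms of a bimonad, for an endofunctor with structure morphisms given as
plain families. -/
structure IsBimonadFam (T : V ⥤ V)
    (μT : ∀ M : V, T.obj (T.obj M) ⟶ T.obj M)
    (ηT : ∀ M : V, M ⟶ T.obj M)
    (δT : ∀ M N : V, T.obj (M ⊗ N) ⟶ T.obj M ⊗ T.obj N)
    (εT : T.obj (𝟙_ V) ⟶ 𝟙_ V) : Prop where
  μ_natural : ∀ {M N : V} (f : M ⟶ N), T.map (T.map f) ≫ μT N = μT M ≫ T.map f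
  η_natural : ∀ {M N : V} (f : M ⟶ N), f ≫ ηT N = ηT M ≫ T.map f
  δ_natural : ∀ {M M' N N' : V} (f : M ⟶ M') (g : N ⟶ N'),
    T.map (f ⊗ₘ g) ≫ δT M' N' = δT M N ≫ (T.map f ⊗ₘ T.map g)
  mul_assoc : ∀ M : V, T.map (μT M) ≫ μT M = μT (T.obj M) ≫ μT M
  mul_unit_left : ∀ M : V, ηT (T.obj M) ≫ μT M = 𝟙 (T.obj M)
  mul_unit_right : ∀ M : V, T.map (ηT M) ≫ μT M = 𝟙 (T.obj M)
  comul_coassoc : ∀ M N P : V,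
    δT (M ⊗ N) P ≫ (δT M N ▷ T.obj P) ≫ (α_ (T.obj M) (T.obj N) (T.obj P)).hom =
      T.map (α_ M N P).hom ≫ δT M (N ⊗ P) ≫ (T.obj M ◁ δT N P)
  comul_counit_left : ∀ M : V,
    δT (𝟙_ V) M ≫ (εT ▷ T.obj M) ≫ (λ_ (T.obj M)).hom = T.map (λ_ M).hom
  comul_counit_right : ∀ M : V,
    δT M (𝟙_ V) ≫ (T.obj M ◁ εT) ≫ (ρ_ (T.obj M)).hom = T.map (ρ_ M).hom
  μ_comonoidal : ∀ M N : V,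
    μT (M ⊗ N) ≫ δT M N =
      T.map (δT M N) ≫ δT (T.obj M) (T.obj N) ≫ (μT M ⊗ₘ μT N)
  μ_counit : μT (𝟙_ V) ≫ εT = T.map εT ≫ εT
  η_comonoidal : ∀ M N : V, ηT (M ⊗ N) ≫ δT M N = ηT M ⊗ₘ ηT N
  η_counit : ηT (𝟙_ V) ≫ εT = 𝟙 (𝟙_ V)

variable (cd : ConstructionData ω)

/-- The defining equation of the multiplication `μ` of the bimonad `T`
(on the universal dinatural transformations). -/
def MuEq (μT : ∀ M : V, cd.T.obj (cd.T.obj M) ⟶ cd.T.obj M) : Prop :=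
  ∀ (x y : D) (M : V),
    ((ω.obj x ◁ cd.i y M) ▷ cd.dual x) ≫ cd.i x (cd.T.obj M) ≫ μT M =
      (𝟙 ((ω.obj x ⊗ ((ω.obj y ⊗ M) ⊗ cd.dual y)) ⊗ cd.dual x) ⊗≫
        ((LaxMonoidal.μ ω x y ▷ M) ▷ (cd.dual y ⊗ cd.dual x))) ≫
        ((ω.obj (x ⊗ y) ⊗ M) ◁ cd.d2 x y) ≫ cd.i (x ⊗ y) M

/-- The defining equation of the unit `η` of the bimonad `T`. -/
def EtaEq (ηT : ∀ M : V, M ⟶ cd.T.obj M) : Prop :=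
  ∀ M : V,
    ηT M = (λ_ M).inv ≫ (LaxMonoidal.ε ω ▷ M) ≫ (ρ_ (ω.obj (𝟙_ D) ⊗ M)).inv ≫
      ((ω.obj (𝟙_ D) ⊗ M) ◁ cd.d0) ≫ cd.i (𝟙_ D) M

/-- The defining equation of the comultiplication `δ` of the bimonad `T`. -/
def DeltaEq (δT : ∀ M N : V, cd.T.obj (M ⊗ N) ⟶ cd.T.obj M ⊗ cd.T.obj N) : Prop :=
  ∀ (x : D) (M N : V),
    cd.i x (M ⊗ N) ≫ δT M N =
      (𝟙 ((ω.obj x ⊗ (M ⊗ N)) ⊗ cd.dual x) ⊗≫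
        ((ω.obj x ⊗ M) ◁ (cd.coev x ▷ (N ⊗ cd.dual x))) ⊗≫
        (cd.i x M ⊗ₘ cd.i x N))

/-- The defining equation of the counit `ε` of the bimonad `T`. -/
def EpsEq (εT : cd.T.obj (𝟙_ V) ⟶ 𝟙_ V) : Prop :=
  ∀ x : D, cd.i x (𝟙_ V) ≫ εT = ((ρ_ (ω.obj x)).hom ▷ cd.dual x) ≫ cd.ev x


variable (ω) in
/-- A construction data together with the structure morphisms of the associated bimonad
`T` (defined by the equations of Theorem 3.2) and the bimonad axioms. -/
structure FRTData where
  cd : ConstructionData ω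
  μT : ∀ M : V, cd.T.obj (cd.T.obj M) ⟶ cd.T.obj M
  ηT : ∀ M : V, M ⟶ cd.T.obj M
  δT : ∀ M N : V, cd.T.obj (M ⊗ N) ⟶ cd.T.obj M ⊗ cd.T.obj N
  εT : cd.T.obj (𝟙_ V) ⟶ 𝟙_ V
  hμ : MuEq cd μT
  hη : EtaEq cd ηT
  hδ : DeltaEq cd δT
  hε : EpsEq cd εT
  bimonad : IsBimonadFam cd.T μT ηT δT εT

variable (cd : ConstructionData ω)

/-- The end `T^♮ M = ∫_{x ∈ D} (ω x)^∨ ⊗ M ⊗ ω x`, packaged via its universal property. -/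
structure EndData where
  G : V ⥤ V
  j : ∀ (x : D) (M : V), G.obj M ⟶ (cd.dual x ⊗ M) ⊗ ω.obj x
  dinat : ∀ {x y : D} (f : x ⟶ y) (M : V),
    j x M ≫ ((cd.dual x ⊗ M) ◁ ω.map f) = j y M ≫ ((cd.dmap f ▷ M) ▷ ω.obj y)
  nat : ∀ (x : D) {M N : V} (g : M ⟶ N),
    G.map g ≫ j x N = j x M ≫ ((cd.dual x ◁ g) ▷ ω.obj x)
  universal : ∀ (M N : V) (f : ∀ x : D, N ⟶ (cd.dual x ⊗ M) ⊗ ω.obj x),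
    (∀ {x y : D} (h : x ⟶ y),
      f x ≫ ((cd.dual x ⊗ M) ◁ ω.map h) = f y ≫ ((cd.dmap h ▷ M) ▷ ω.obj y)) →
    ∃! g : N ⟶ G.obj M, ∀ x : D, g ≫ j x M = f x
end CData

/-!
For an exact pairing `Y ⊣ Y'` (here `(ω x)^∨` and `ω x`), pulling strings on both sides gives
Frobenius reciprocity `((Y' ⊗ M) ⊗ Y ⟶ N) ≃ (M ⟶ (Y ⊗ N) ⊗ Y')`. Since the transpose
`(ω f)^∨` is the mate of `ω f`, this bijection carries the dinaturality condition of the coend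
`T M = ∫^x ω x ⊗ M ⊗ (ω x)^∨` onto the wedge condition of the end
`T^♮ N = ∫_x (ω x)^∨ ⊗ N ⊗ ω x`, so `Hom(T M, N) ≃ Hom(M, T^♮ N)` naturally in `M` and `N`.
When `V` is complete this end exists: an end over the essentially small `D` can be computed
over a small model of `D`.
-/

namespace CategoryTheory

open MonoidalCategory

variable {C : Type*} [Category C] [MonoidalCategory C]

section

-- `hfg` says that `g` is the mate of `f`.
variable {Y Y' Z Z' : C} [ExactPairing Y Y'] [ExactPairing Z Z'] {f : Y' ⟶ Z'} {g : Z ⟶ Y}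

lemma tensorRightHomEquiv_whiskerLeft_comp (hfg : η_ Z Z' ≫ g ▷ Z' = η_ Y Y' ≫ Y ◁ f)
    {A W : C} (u : A ⊗ Y ⟶ W) :
    tensorRightHomEquiv A Z Z' W ((A ◁ g) ≫ u) =
      tensorRightHomEquiv A Y Y' W u ≫ (W ◁ f) := by
  simp only [tensorRightHomEquiv, Equiv.coe_fn_mk, comp_whiskerRight, Category.assoc]
  rw [← associator_inv_naturality_middle_assoc, ← whiskerLeft_comp_assoc, hfg,
    whiskerLeft_comp_assoc, associator_inv_naturality_right_assoc, whisker_exchange]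

lemma tensorLeftHomEquiv_whiskerRight_comp (hfg : η_ Z Z' ≫ g ▷ Z' = η_ Y Y' ≫ Y ◁ f)
    {A W : C} (v : Z' ⊗ A ⟶ W) :
    tensorLeftHomEquiv A Y Y' W ((f ▷ A) ≫ v) =
      tensorLeftHomEquiv A Z Z' W v ≫ (g ▷ W) := by
  simp only [tensorLeftHomEquiv, Equiv.coe_fn_mk, whiskerLeft_comp]
  rw [← associator_naturality_middle_assoc, ← comp_whiskerRight_assoc, ← hfg,
    comp_whiskerRight_assoc, associator_naturality_left_assoc, ← whisker_exchange]
  simp only [Category.assoc]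

end

section

variable {X X' Y Y' Z : C} [ExactPairing Y Y']

lemma tensorRightHomEquiv_whiskerRight_comp (f : X' ⟶ X) (g : X ⊗ Y ⟶ Z) :
    tensorRightHomEquiv X' Y Y' Z (f ▷ Y ≫ g) = f ≫ tensorRightHomEquiv X Y Y' Z g := by
  rw [← Equiv.eq_symm_apply, tensorRightHomEquiv_symm_naturality, Equiv.symm_apply_apply]

lemma tensorLeftHomEquiv_whiskerLeft_comp (f : X' ⟶ X) (g : Y' ⊗ X ⟶ Z) :
    tensorLeftHomEquiv X' Y Y' Z (Y' ◁ f ≫ g) = f ≫ tensorLeftHomEquiv X Y Y' Z g := by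
  rw [← Equiv.eq_symm_apply, tensorLeftHomEquiv_symm_naturality, Equiv.symm_apply_apply]

end

def tensorLeftRightHomEquiv (M Y Y' N : C) [ExactPairing Y Y'] :
    ((Y' ⊗ M) ⊗ Y ⟶ N) ≃ (M ⟶ (Y ⊗ N) ⊗ Y') :=
  ((tensorRightHomEquiv _ Y Y' N).trans (tensorLeftHomEquiv M Y Y' _)).trans
    ((Iso.refl M).homCongr (α_ Y N Y').symm)

section

variable {Y Y' : C} [ExactPairing Y Y']

lemma tensorLeftRightHomEquiv_apply {M N : C} (u : (Y' ⊗ M) ⊗ Y ⟶ N) :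
    tensorLeftRightHomEquiv M Y Y' N u =
      tensorLeftHomEquiv M Y Y' _ (tensorRightHomEquiv _ Y Y' N u) ≫ (α_ Y N Y').inv := by
  simp [tensorLeftRightHomEquiv, Iso.homCongr_apply]

lemma tensorLeftRightHomEquiv_naturality {M N N' : C} (u : (Y' ⊗ M) ⊗ Y ⟶ N) (n : N ⟶ N') :
    tensorLeftRightHomEquiv M Y Y' N' (u ≫ n) =
      tensorLeftRightHomEquiv M Y Y' N u ≫ (Y ◁ n) ▷ Y' := by
  rw [tensorLeftRightHomEquiv_apply, tensorLeftRightHomEquiv_apply,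
    tensorRightHomEquiv_naturality, tensorLeftHomEquiv_naturality, Category.assoc,
    associator_inv_naturality_middle, Category.assoc]

lemma tensorLeftRightHomEquiv_symm_naturality {M M' N : C} (m : M' ⟶ M)
    (k : M ⟶ (Y ⊗ N) ⊗ Y') :
    (tensorLeftRightHomEquiv M' Y Y' N).symm (m ≫ k) =
      ((Y' ◁ m) ▷ Y) ≫ (tensorLeftRightHomEquiv M Y Y' N).symm k := by
  rw [Equiv.symm_apply_eq, tensorLeftRightHomEquiv_apply, tensorRightHomEquiv_whiskerRight_comp,
    tensorLeftHomEquiv_whiskerLeft_comp, Category.assoc, ← tensorLeftRightHomEquiv_apply,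
    Equiv.apply_symm_apply]

lemma tensorLeftRightHomEquiv_wedge_iff {Z Z' : C} [ExactPairing Z Z'] {f : Y' ⟶ Z'}
    {g : Z ⟶ Y} (hfg : η_ Z Z' ≫ g ▷ Z' = η_ Y Y' ≫ Y ◁ f) {M N : C}
    (u : (Y' ⊗ M) ⊗ Y ⟶ N) (v : (Z' ⊗ M) ⊗ Z ⟶ N) :
    ((f ▷ M) ▷ Z) ≫ v = ((Y' ⊗ M) ◁ g) ≫ u ↔
      tensorLeftRightHomEquiv M Y Y' N u ≫ ((Y ⊗ N) ◁ f) =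
        tensorLeftRightHomEquiv M Z Z' N v ≫ ((g ▷ N) ▷ Z') := by
  rw [← (tensorRightHomEquiv _ Z Z' N).apply_eq_iff_eq, tensorRightHomEquiv_whiskerRight_comp,
    tensorRightHomEquiv_whiskerLeft_comp hfg, ← (tensorLeftHomEquiv M Y Y' _).apply_eq_iff_eq,
    tensorLeftHomEquiv_whiskerRight_comp hfg, tensorLeftHomEquiv_naturality,
    tensorLeftRightHomEquiv_apply, tensorLeftRightHomEquiv_apply, Category.assoc, Category.assoc,
    ← associator_inv_naturality_right, ← associator_inv_naturality_left, ← Category.assoc,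
    ← Category.assoc, cancel_mono, eq_comm]

end

end CategoryTheory

namespace CategoryTheory.Limits

open Opposite

universe w v u v' u' v'' u''

variable {J : Type u} [Category.{v} J] {J' : Type u''} [Category.{v''} J']
  {C : Type u'} [Category.{v'} C]

abbrev restrictBifunctor (G : J' ⥤ J) (F : Jᵒᵖ ⥤ J ⥤ C) : J'ᵒᵖ ⥤ J' ⥤ C :=
  G.op ⋙ F ⋙ (Functor.whiskeringLeft J' J C).obj G

variable {F : Jᵒᵖ ⥤ J ⥤ C}

lemma wedge_eq_of_iso {X : C} {π : ∀ j, X ⟶ (F.obj (op j)).obj j}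
    (hπ : ∀ ⦃i j : J⦄ (f : i ⟶ j),
      π i ≫ (F.obj (op i)).map f = π j ≫ (F.map f.op).app j)
    {i j : J} (φ : i ≅ j) :
    π i = π j ≫ (F.map φ.hom.op).app j ≫ (F.obj (op i)).map φ.inv := by
  rw [← reassoc_of% hπ φ.hom, Iso.map_hom_inv_id, Category.comp_id]

namespace EndOfEquivalence

variable (e : J ≌ J') [HasEnd (restrictBifunctor e.inverse F)]

noncomputable def π (j : J) : end_ (restrictBifunctor e.inverse F) ⟶ (F.obj (op j)).obj j :=
  end_.π _ (e.functor.obj j) ≫ (F.map (e.unit.app j).op).app _ ≫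
    (F.obj (op j)).map (e.unitInv.app j)

lemma π_condition ⦃i j : J⦄ (f : i ⟶ j) :
    π e i ≫ (F.obj (op i)).map f = π e j ≫ (F.map f.op).app j := by
  have hπ : end_.π (restrictBifunctor e.inverse F) (e.functor.obj i) ≫
      (F.obj (op (e.inverse.obj (e.functor.obj i)))).map (e.inverse.map (e.functor.map f)) =
      end_.π (restrictBifunctor e.inverse F) (e.functor.obj j) ≫
        (F.map (e.inverse.map (e.functor.map f)).op).app (e.inverse.obj (e.functor.obj j)) :=
    end_.condition (restrictBifunctor e.inverse F) (e.functor.map f)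
  have hunitInv : e.unitInv.app i ≫ f = e.inverse.map (e.functor.map f) ≫ e.unitInv.app j :=
    (e.unitInv.naturality f).symm
  have hunit :
      (F.map (e.inverse.map (e.functor.map f)).op).app (e.inverse.obj (e.functor.obj j)) ≫
        (F.map (e.unit.app i).op).app _ =
      (F.map (e.unit.app j).op).app _ ≫ (F.map f.op).app _ := by
    simp
  have hF₁ := (F.map (e.unit.app i).op).naturality (e.inverse.map (e.functor.map f))
  have hF₂ := (F.map f.op).naturality (e.unitInv.app j)
  dsimp only [Functor.comp_obj, Functor.id_obj] at hF₁ hF₂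
  simp only [π, Category.assoc, ← Functor.map_comp, hunitInv]
  rw [Functor.map_comp, ← reassoc_of% hF₁, reassoc_of% hπ, reassoc_of% hunit, hF₂]

variable {e}

noncomputable def lift {X : C} (p : ∀ j, X ⟶ (F.obj (op j)).obj j)
    (hp : ∀ ⦃i j : J⦄ (f : i ⟶ j),
      p i ≫ (F.obj (op i)).map f = p j ≫ (F.map f.op).app j) :
    X ⟶ end_ (restrictBifunctor e.inverse F) :=
  end_.lift (fun a => p (e.inverse.obj a)) (fun _ _ φ => hp (e.inverse.map φ))

lemma lift_π {X : C} (p : ∀ j, X ⟶ (F.obj (op j)).obj j)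
    (hp : ∀ ⦃i j : J⦄ (f : i ⟶ j),
      p i ≫ (F.obj (op i)).map f = p j ≫ (F.map f.op).app j)
    (j : J) : lift p hp ≫ π e j = p j := by
  rw [lift, π, end_.lift_π_assoc]
  exact (wedge_eq_of_iso hp (e.unitIso.app j)).symm

lemma hom_ext {X : C} {g₁ g₂ : X ⟶ end_ (restrictBifunctor e.inverse F)}
    (h : ∀ j, g₁ ≫ π e j = g₂ ≫ π e j) : g₁ = g₂ := by
  have hfunctor (j : J) :
      g₁ ≫ end_.π _ (e.functor.obj j) = g₂ ≫ end_.π _ (e.functor.obj j) := by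
    simpa only [π, ← Category.assoc, cancel_mono] using h j
  refine end_.hom_ext fun a => ?_
  have hcounit := wedge_eq_of_iso (fun _ _ f => end_.condition (restrictBifunctor e.inverse F) f)
    (e.counitIso.symm.app a)
  dsimp only [Functor.id_obj, Functor.comp_obj] at hcounit
  rw [hcounit, reassoc_of% hfunctor]

end EndOfEquivalence

open EndOfEquivalence in
theorem hasEnd_of_equivalence (e : J ≌ J') [HasEnd (restrictBifunctor e.inverse F)] :
    HasEnd F :=
  HasLimit.mk
    { cone := Wedge.mk _ (π e) (π_condition e)
      isLimit :=
        have fac (c : Wedge F) :=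
          lift_π (J := J) (fun j => c.ι j) fun _ _ f => Wedge.condition c f
        Multifork.IsLimit.mk _ _ fac fun c _ hm => hom_ext fun j => (hm j).trans (fac c j).symm }

instance hasEnd_of_essentiallySmall [EssentiallySmall.{w} J] [HasLimitsOfSize.{w, w} C] :
    HasEnd F :=
  hasEnd_of_equivalence (equivSmallModel.{w} J)

end CategoryTheory.Limits

namespace CData

open CategoryTheory MonoidalCategory CategoryTheory.Functor Limits

universe v₁ v₂ u₁ u₂

variable {D : Type u₁} [Category.{v₁} D] [MonoidalCategory D]
variable {V : Type u₂} [Category.{v₂} V] [MonoidalCategory V]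
variable {ω : D ⥤ V} [ω.Monoidal]
variable (cd : ConstructionData ω)

namespace ConstructionData

instance exactPairing (x : D) : ExactPairing (cd.dual x) (ω.obj x) where
  coevaluation' := cd.coev x
  evaluation' := cd.ev x
  coevaluation_evaluation' := by
    rw [← cancel_epi (ρ_ (ω.obj x)).inv, ← cancel_mono (λ_ (ω.obj x)).hom]
    simpa using cd.zig x
  evaluation_coevaluation' := by
    rw [← cancel_epi (λ_ (cd.dual x)).inv, ← cancel_mono (ρ_ (cd.dual x)).hom]
    simpa using cd.zag x

abbrev hasLeftDual (x : D) : HasLeftDual (ω.obj x) := ⟨cd.dual x⟩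

lemma dmap_eq_leftAdjointMate {x y : D} (f : x ⟶ y) :
    let := cd.hasLeftDual x; let := cd.hasLeftDual y
    cd.dmap f = ᘁ(ω.map f) := by
  rw [cd.dmap_spec]
  dsimp only [leftAdjointMate]
  monoidal

lemma coev_comp_dmap_whiskerRight {x y : D} (f : x ⟶ y) :
    cd.coev y ≫ cd.dmap f ▷ ω.obj y = cd.coev x ≫ cd.dual x ◁ ω.map f := by
  let := cd.hasLeftDual x; let := cd.hasLeftDual y
  rw [cd.dmap_eq_leftAdjointMate]
  exact coevaluation_comp_leftAdjointMate (ω.map f)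

lemma dmap_id (x : D) : cd.dmap (𝟙 x) = 𝟙 (cd.dual x) := by
  let := cd.hasLeftDual x
  rw [cd.dmap_eq_leftAdjointMate, ω.map_id, leftAdjointMate_id]
  rfl

lemma dmap_comp {x y z : D} (f : x ⟶ y) (g : y ⟶ z) :
    cd.dmap (f ≫ g) = cd.dmap g ≫ cd.dmap f := by
  let := cd.hasLeftDual x; let := cd.hasLeftDual y; let := cd.hasLeftDual z
  rw [cd.dmap_eq_leftAdjointMate, cd.dmap_eq_leftAdjointMate, cd.dmap_eq_leftAdjointMate,
    ω.map_comp, comp_leftAdjointMate]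

def endIntegrand : V ⥤ Dᵒᵖ ⥤ D ⥤ V where
  obj M :=
    { obj x :=
        { obj y := (cd.dual x.unop ⊗ M) ⊗ ω.obj y
          map g := _ ◁ ω.map g }
      map f :=
        { app y := (cd.dmap f.unop ▷ M) ▷ ω.obj y
          naturality _ _ _ := whisker_exchange _ _ }
      map_id _ := by
        ext
        simp only [unop_id, cd.dmap_id, id_whiskerRight, NatTrans.id_app]
      map_comp _ _ := by
        ext
        simp only [unop_comp, cd.dmap_comp, comp_whiskerRight, NatTrans.comp_app] }
  map g :=
    { app x :=
        { app y := (cd.dual x.unop ◁ g) ▷ ω.obj y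
          naturality _ _ _ := whisker_exchange _ _ }
      naturality _ _ _ := by
        ext
        dsimp only [NatTrans.comp_app]
        rw [← comp_whiskerRight, ← comp_whiskerRight, whisker_exchange] }
  map_id _ := by
    ext
    simp only [NatTrans.id_app, MonoidalCategory.whiskerLeft_id, id_whiskerRight]
  map_comp _ _ := by
    ext
    simp only [NatTrans.comp_app, MonoidalCategory.whiskerLeft_comp, comp_whiskerRight]

noncomputable def endData [EssentiallySmall.{v₂} D] [HasLimits V] : EndData cd where
  G := cd.endIntegrand ⋙ endFunctor D V
  j x M := end_.π (cd.endIntegrand.obj M) x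
  dinat f M := end_.condition (cd.endIntegrand.obj M) f
  nat x _ _ g := end_.map_π (cd.endIntegrand.map g) x
  universal M _ f hf :=
    ⟨end_.lift f fun _ _ h => hf h, end_.lift_π _ _, fun _ hg =>
      end_.hom_ext fun x =>
        (hg x).trans (end_.lift_π (F := cd.endIntegrand.obj M) f (fun _ _ h => hf h) x).symm⟩

variable {cd}

lemma hom_ext {M N : V} {g₁ g₂ : cd.T.obj M ⟶ N}
    (h : ∀ x, cd.i x M ≫ g₁ = cd.i x M ≫ g₂) :
    g₁ = g₂ :=
  (cd.universal M N (fun x => cd.i x M ≫ g₁) fun f => by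
      rw [← Category.assoc, ← Category.assoc, cd.dinat]).unique
    (fun _ => rfl) (fun x => (h x).symm)

noncomputable def desc {M N : V} (f : ∀ x, (ω.obj x ⊗ M) ⊗ cd.dual x ⟶ N)
    (hf : ∀ {x y : D} (h : x ⟶ y),
      ((ω.map h ▷ M) ▷ cd.dual y) ≫ f y = ((ω.obj x ⊗ M) ◁ cd.dmap h) ≫ f x) :
    cd.T.obj M ⟶ N :=
  (cd.universal M N f hf).exists.choose

lemma i_desc {M N : V} (f : ∀ x, (ω.obj x ⊗ M) ⊗ cd.dual x ⟶ N)
    (hf : ∀ {x y : D} (h : x ⟶ y),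
      ((ω.map h ▷ M) ▷ cd.dual y) ≫ f y = ((ω.obj x ⊗ M) ◁ cd.dmap h) ≫ f x) (x : D) :
    cd.i x M ≫ desc f hf = f x :=
  (cd.universal M N f hf).exists.choose_spec x

lemma wedge_transpose {M N : V} (g : cd.T.obj M ⟶ N) {x y : D} (h : x ⟶ y) :
    tensorLeftRightHomEquiv M _ _ N (cd.i x M ≫ g) ≫ ((cd.dual x ⊗ N) ◁ ω.map h) =
      tensorLeftRightHomEquiv M _ _ N (cd.i y M ≫ g) ≫ ((cd.dmap h ▷ N) ▷ ω.obj y) :=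
  (tensorLeftRightHomEquiv_wedge_iff (cd.coev_comp_dmap_whiskerRight h) _ _).mp <| by
    rw [← Category.assoc, ← Category.assoc, cd.dinat]

end ConstructionData

namespace EndData

variable {cd} (ed : EndData cd)

lemma hom_ext {M N : V} {g₁ g₂ : N ⟶ ed.G.obj M}
    (h : ∀ x, g₁ ≫ ed.j x M = g₂ ≫ ed.j x M) :
    g₁ = g₂ :=
  (ed.universal M N (fun x => g₁ ≫ ed.j x M) fun f => by
      rw [Category.assoc, Category.assoc, ed.dinat]).unique
    (fun _ => rfl) (fun x => (h x).symm)

noncomputable def lift {M N : V} (f : ∀ x, N ⟶ (cd.dual x ⊗ M) ⊗ ω.obj x)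
    (hf : ∀ {x y : D} (h : x ⟶ y),
      f x ≫ ((cd.dual x ⊗ M) ◁ ω.map h) = f y ≫ ((cd.dmap h ▷ M) ▷ ω.obj y)) :
    N ⟶ ed.G.obj M :=
  (ed.universal M N f hf).exists.choose

lemma lift_j {M N : V} (f : ∀ x, N ⟶ (cd.dual x ⊗ M) ⊗ ω.obj x)
    (hf : ∀ {x y : D} (h : x ⟶ y),
      f x ≫ ((cd.dual x ⊗ M) ◁ ω.map h) = f y ≫ ((cd.dmap h ▷ M) ▷ ω.obj y)) (x : D) :
    ed.lift f hf ≫ ed.j x M = f x :=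
  (ed.universal M N f hf).exists.choose_spec x

lemma dinat_transpose_symm {M N : V} (k : M ⟶ ed.G.obj N) {x y : D} (h : x ⟶ y) :
    ((ω.map h ▷ M) ▷ cd.dual y) ≫ (tensorLeftRightHomEquiv M _ _ N).symm (k ≫ ed.j y N) =
      ((ω.obj x ⊗ M) ◁ cd.dmap h) ≫
        (tensorLeftRightHomEquiv M _ _ N).symm (k ≫ ed.j x N) :=
  (tensorLeftRightHomEquiv_wedge_iff (cd.coev_comp_dmap_whiskerRight h) _ _).mpr <| by
    rw [Equiv.apply_symm_apply, Equiv.apply_symm_apply, Category.assoc, Category.assoc, ed.dinat]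

noncomputable def homEquiv (M N : V) : (cd.T.obj M ⟶ N) ≃ (M ⟶ ed.G.obj N) where
  toFun g := ed.lift (fun x => tensorLeftRightHomEquiv M _ _ N (cd.i x M ≫ g))
    (ConstructionData.wedge_transpose g)
  invFun k := ConstructionData.desc
    (fun x => (tensorLeftRightHomEquiv M _ _ N).symm (k ≫ ed.j x N)) (ed.dinat_transpose_symm k)
  left_inv g := ConstructionData.hom_ext fun x => by
    rw [ConstructionData.i_desc, lift_j, Equiv.symm_apply_apply]
  right_inv k := ed.hom_ext fun x => by
    rw [lift_j, ConstructionData.i_desc, Equiv.apply_symm_apply]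

lemma homEquiv_apply_j {M N : V} (g : cd.T.obj M ⟶ N) (x : D) :
    ed.homEquiv M N g ≫ ed.j x N = tensorLeftRightHomEquiv M _ _ N (cd.i x M ≫ g) :=
  ed.lift_j _ (ConstructionData.wedge_transpose g) x

lemma i_homEquiv_symm_apply {M N : V} (k : M ⟶ ed.G.obj N) (x : D) :
    cd.i x M ≫ (ed.homEquiv M N).symm k =
      (tensorLeftRightHomEquiv M _ _ N).symm (k ≫ ed.j x N) :=
  ConstructionData.i_desc _ (ed.dinat_transpose_symm k) x

noncomputable def adjunction : cd.T ⊣ ed.G :=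
  Adjunction.mkOfHomEquiv
    { homEquiv := ed.homEquiv
      homEquiv_naturality_left_symm := fun f k => ConstructionData.hom_ext fun x => by
        rw [← Category.assoc, ← cd.nat, Category.assoc, i_homEquiv_symm_apply,
          i_homEquiv_symm_apply, Category.assoc, tensorLeftRightHomEquiv_symm_naturality]
      homEquiv_naturality_right := fun g n => ed.hom_ext fun x => by
        rw [homEquiv_apply_j, Category.assoc, ed.nat, reassoc_of% ed.homEquiv_apply_j,
          ← tensorLeftRightHomEquiv_naturality, Category.assoc] }

end EndData

/-- If `V` is complete, the bimonad `T` associated to a construction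
data `(D, ω)` (with `D` essentially small) admits a right adjoint, given by the end
`T^♮ M = ∫_x (ω x)^∨ ⊗ M ⊗ ω x`. -/
theorem T_has_right_adjoint
    [∀ X : V, Limits.PreservesColimits (tensorLeft X)]
    [∀ X : V, Limits.PreservesColimits (tensorRight X)]
    [EssentiallySmall.{v₂} D] [Limits.HasLimits V] :
    cd.T.IsLeftAdjoint ∧ ∀ ed : EndData cd, Nonempty (cd.T ⊣ ed.G) :=
  ⟨cd.endData.adjunction.isLeftAdjoint, fun ed => ⟨ed.adjunction⟩⟩

end CData
end

section
/- Let (D, ω) be a construction data over a monoidal category V with cocontinuous tensor product, and let T be the associated bimonad. Then the assignment x ↦ (ω(x), ∂_x) defines a strong monoidal functor ω̃ : D → Comod_T lifting ω, and the pair (T, ω̃) is universal: for any bimonad T' on V and any strict monoidal functor ω' : D → Comod_{T'} with U^{T'} ∘ ω' = ω, there is a unique morphism of bimonads φ : T → T' such that ω' = φ_♯ ∘ ω̃, where φ_♯ : Comod_T → Comod_{T'} is the functor induced by φ. -/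
namespace CData

open CategoryTheory MonoidalCategory CategoryTheory.Functor

universe v₁ v₂ u₁ u₂

variable {D : Type u₁} [Category.{v₁} D] [MonoidalCategory D]
variable {V : Type u₂} [Category.{v₂} V] [MonoidalCategory V]

variable {ω : D ⥤ V} [ω.Monoidal]

variable (cd : ConstructionData ω)

variable (cd : ConstructionData ω)

/-- The natural transformation `∂_x(M) : ω x ⊗ M ⟶ T M ⊗ ω x`. -/
def par (x : D) (M : V) : ω.obj x ⊗ M ⟶ cd.T.obj M ⊗ ω.obj x :=
  (ρ_ (ω.obj x ⊗ M)).inv ≫ ((ω.obj x ⊗ M) ◁ cd.coev x) ≫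
    (α_ (ω.obj x ⊗ M) (cd.dual x) (ω.obj x)).inv ≫ (cd.i x M ▷ ω.obj x)

/-- The conditions for a family `β x M : ω x ⊗ M ⟶ T' M ⊗ ω x` to define a
(strict monoidal, comonoidal-compatible) lift `ω' : D ⥤ Comod_{T'}` of `ω` to the
category of comodules over a bimonad `(T', μ', η', δ', ε')`, with `U^{T'} ∘ ω' = ω`
as monoidal functors. -/
structure IsComodLift (T' : V ⥤ V)
    (μ' : ∀ M : V, T'.obj (T'.obj M) ⟶ T'.obj M)
    (η' : ∀ M : V, M ⟶ T'.obj M)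
    (δ' : ∀ M N : V, T'.obj (M ⊗ N) ⟶ T'.obj M ⊗ T'.obj N)
    (ε' : T'.obj (𝟙_ V) ⟶ 𝟙_ V)
    (β : ∀ (x : D) (M : V), ω.obj x ⊗ M ⟶ T'.obj M ⊗ ω.obj x) : Prop where
  nat_M : ∀ (x : D) {M N : V} (g : M ⟶ N),
    (ω.obj x ◁ g) ≫ β x N = β x M ≫ (T'.map g ▷ ω.obj x)
  nat_x : ∀ {x y : D} (f : x ⟶ y) (M : V),
    (ω.map f ▷ M) ≫ β y M = β x M ≫ (T'.obj M ◁ ω.map f)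
  comod_tensor : ∀ (x : D) (M N : V),
    β x (M ⊗ N) ≫ (δ' M N ▷ ω.obj x) =
      (α_ (ω.obj x) M N).inv ≫ (β x M ▷ N) ≫ (α_ (T'.obj M) (ω.obj x) N).hom ≫
        (T'.obj M ◁ β x N) ≫ (α_ (T'.obj M) (T'.obj N) (ω.obj x)).inv
  comod_unit : ∀ x : D,
    β x (𝟙_ V) ≫ (ε' ▷ ω.obj x) ≫ (λ_ (ω.obj x)).hom = (ρ_ (ω.obj x)).hom
  lift_tensor : ∀ (x y : D) (M : V),
    (α_ (ω.obj x) (ω.obj y) M).hom ≫ (ω.obj x ◁ β y M) ≫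
      (α_ (ω.obj x) (T'.obj M) (ω.obj y)).inv ≫ (β x (T'.obj M) ▷ ω.obj y) ≫
      ((μ' M ▷ ω.obj x) ▷ ω.obj y) ≫ (α_ (T'.obj M) (ω.obj x) (ω.obj y)).hom =
    (LaxMonoidal.μ ω x y ▷ M) ≫ β (x ⊗ y) M ≫ (T'.obj M ◁ OplaxMonoidal.δ ω x y)
  lift_unit : ∀ M : V,
    (λ_ M).inv ≫ (LaxMonoidal.ε ω ▷ M) ≫ β (𝟙_ D) M ≫
      (T'.obj M ◁ OplaxMonoidal.η ω) ≫ (ρ_ (T'.obj M)).hom = η' M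

variable (fd : FRTData ω)

/-!
Since `ω x` has the dual `dual x`, transposition identifies maps `ω x ⊗ M ⟶ P ⊗ ω x` with maps
`(ω x ⊗ M) ⊗ dual x ⟶ P`, and `∂_x` is the transpose of the universal dinatural map `i_x`.
A lift `β` to `Comod_{T'}` transposes to a dinatural family, so by the universal property of
the coend it factors uniquely as `β x M = ∂_x M ≫ (φ M ▷ ω x)` with `φ : T ⟶ T'`. Each comodule or
lift axiom transposes exactly into the defining equation of `μ`, `η`, `δ` or `ε` of `T`;
read in one direction this says that `∂` is a lift, in the other that `φ` respects the
bimonad structures.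
-/

abbrev ConstructionData.exactPairing_s7 (x : D) : ExactPairing (cd.dual x) (ω.obj x) where
  coevaluation' := cd.coev x
  evaluation' := cd.ev x
  coevaluation_evaluation' := by
    rw [← cancel_epi (ρ_ (ω.obj x)).inv, ← cancel_mono (λ_ (ω.obj x)).hom]
    simpa using cd.zig x
  evaluation_coevaluation' := by
    rw [← cancel_epi (λ_ (cd.dual x)).inv, ← cancel_mono (ρ_ (cd.dual x)).hom]
    simpa using cd.zag x

abbrev ConstructionData.hasLeftDual_s7 (x : D) : HasLeftDual (ω.obj x) :=
  { leftDual := cd.dual x, exact := cd.exactPairing_s7 x }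

lemma ConstructionData.dmap_eq_leftAdjointMate_s7 {x y : D} (f : x ⟶ y) :
    letI := cd.hasLeftDual_s7 x; letI := cd.hasLeftDual_s7 y
    cd.dmap f = (ᘁ(ω.map f)) := by
  rw [cd.dmap_spec]
  unfold leftAdjointMate
  monoidal

lemma ConstructionData.coev_comp_dmap {x y : D} (f : x ⟶ y) :
    cd.coev y ≫ (cd.dmap f ▷ ω.obj y) = cd.coev x ≫ (cd.dual x ◁ ω.map f) := by
  let _ := cd.hasLeftDual_s7 x; let _ := cd.hasLeftDual_s7 y
  rw [cd.dmap_eq_leftAdjointMate_s7]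
  exact coevaluation_comp_leftAdjointMate (ω.map f)

lemma ConstructionData.zig'' (x : D) :
    ω.obj x ◁ cd.coev x ⊗≫ cd.ev x ▷ ω.obj x = ⊗𝟙.hom :=
  letI := cd.exactPairing_s7 x
  ExactPairing.coevaluation_evaluation'' (cd.dual x) (ω.obj x)

abbrev rightTranspose (x : D) (X Z : V) : (X ⊗ cd.dual x ⟶ Z) ≃ (X ⟶ Z ⊗ ω.obj x) :=
  letI := cd.exactPairing_s7 x
  tensorRightHomEquiv X (cd.dual x) (ω.obj x) Z

lemma rightTranspose_apply (x : D) {X Z : V} (g : X ⊗ cd.dual x ⟶ Z) :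
    rightTranspose cd x X Z g = (ρ_ X).inv ≫ (X ◁ cd.coev x) ≫
      (α_ X (cd.dual x) (ω.obj x)).inv ≫ (g ▷ ω.obj x) := rfl

lemma rightTranspose_symm_apply (x : D) {X Z : V} (f : X ⟶ Z ⊗ ω.obj x) :
    (rightTranspose cd x X Z).symm f = (f ▷ cd.dual x) ≫ (α_ Z (ω.obj x) (cd.dual x)).hom ≫
      (Z ◁ cd.ev x) ≫ (ρ_ Z).hom := rfl

lemma par_eq_rightTranspose (x : D) (M : V) :
    par cd x M = rightTranspose cd x _ _ (cd.i x M) := rfl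

lemma rightTranspose_comp (x : D) {X Z Z' : V} (g : X ⊗ cd.dual x ⟶ Z) (h : Z ⟶ Z') :
    rightTranspose cd x X Z' (g ≫ h) = rightTranspose cd x X Z g ≫ (h ▷ ω.obj x) :=
  letI := cd.exactPairing_s7 x
  tensorRightHomEquiv_naturality g h

lemma rightTranspose_symm_comp (x : D) {X X' Z : V} (u : X ⟶ X') (f : X' ⟶ Z ⊗ ω.obj x) :
    (rightTranspose cd x X Z).symm (u ≫ f) =
      (u ▷ cd.dual x) ≫ (rightTranspose cd x X' Z).symm f :=
  letI := cd.exactPairing_s7 x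
  tensorRightHomEquiv_symm_naturality u f

lemma rightTranspose_symm_comp_whiskerRight (x : D) {X Z Z' : V} (f : X ⟶ Z ⊗ ω.obj x)
    (h : Z ⟶ Z') :
    (rightTranspose cd x X Z').symm (f ≫ (h ▷ ω.obj x)) =
      (rightTranspose cd x X Z).symm f ≫ h := by
  rw [Equiv.symm_apply_eq, rightTranspose_comp, Equiv.apply_symm_apply]

lemma rightTranspose_whiskerRight_comp (x : D) {X X' Z : V} (u : X ⟶ X')
    (g : X' ⊗ cd.dual x ⟶ Z) :
    rightTranspose cd x X Z ((u ▷ cd.dual x) ≫ g) = u ≫ rightTranspose cd x X' Z g := by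
  rw [← Equiv.eq_symm_apply, rightTranspose_symm_comp, Equiv.symm_apply_apply]

lemma rightTranspose_whiskerLeft_dmap_comp {x y : D} (f : x ⟶ y) {X Z : V}
    (g : X ⊗ cd.dual x ⟶ Z) :
    rightTranspose cd y X Z ((X ◁ cd.dmap f) ≫ g) =
      rightTranspose cd x X Z g ≫ (Z ◁ ω.map f) := by
  rw [rightTranspose_apply, rightTranspose_apply]
  calc _ = (ρ_ X).inv ≫ X ◁ (cd.coev y ≫ (cd.dmap f ▷ ω.obj y)) ≫
        (α_ X (cd.dual x) (ω.obj y)).inv ≫ (g ▷ ω.obj y) := by monoidal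
    _ = (ρ_ X).inv ≫ X ◁ cd.coev x ≫ (α_ X (cd.dual x) (ω.obj x)).inv ≫
        ((X ⊗ cd.dual x) ◁ ω.map f ≫ g ▷ ω.obj y) := by
      rw [cd.coev_comp_dmap]; monoidal
    _ = _ := by rw [whisker_exchange]; monoidal

lemma rightTranspose_ev (x : D) :
    rightTranspose cd x (ω.obj x) (𝟙_ V) (cd.ev x) = (λ_ (ω.obj x)).inv := by
  rw [rightTranspose_apply, ← cancel_mono (λ_ (ω.obj x)).hom]
  simpa using cd.zig x

lemma ConstructionData.hom_ext_s7 {M N : V} {g₁ g₂ : cd.T.obj M ⟶ N}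
    (h : ∀ x : D, cd.i x M ≫ g₁ = cd.i x M ≫ g₂) : g₁ = g₂ := by
  obtain ⟨g, -, hu⟩ := cd.universal M N (fun x => cd.i x M ≫ g₁)
    (fun f => by rw [← Category.assoc, ← Category.assoc, cd.dinat f M])
  rw [hu g₁ (fun x => rfl), hu g₂ (fun x => (h x).symm)]

-- `ω x ⊗ - ⊗ dual x` has a right adjoint, so it carries the coend `T M` to a coend.
lemma ConstructionData.whisker_hom_ext (x : D) {M N : V}
    {g₁ g₂ : (ω.obj x ⊗ cd.T.obj M) ⊗ cd.dual x ⟶ N}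
    (h : ∀ y : D, ((ω.obj x ◁ cd.i y M) ▷ cd.dual x) ≫ g₁ =
      ((ω.obj x ◁ cd.i y M) ▷ cd.dual x) ≫ g₂) : g₁ = g₂ := by
  let _ := cd.exactPairing_s7 x
  let tl := tensorLeftHomEquiv (cd.T.obj M) (cd.dual x) (ω.obj x) (N ⊗ ω.obj x)
  have tl_whiskerLeft_comp : ∀ {X : V} (u : X ⟶ cd.T.obj M) (g : ω.obj x ⊗ cd.T.obj M ⟶ _),
      u ≫ tl g = tensorLeftHomEquiv X (cd.dual x) (ω.obj x) _ ((ω.obj x ◁ u) ≫ g) := by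
    intro X u g
    rw [← Equiv.symm_apply_eq, tensorLeftHomEquiv_symm_naturality, Equiv.symm_apply_apply]
  apply (rightTranspose cd x _ _).injective
  apply tl.injective
  refine cd.hom_ext_s7 fun y => ?_
  rw [tl_whiskerLeft_comp, tl_whiskerLeft_comp, ← rightTranspose_whiskerRight_comp,
    ← rightTranspose_whiskerRight_comp, h y]

lemma rightTranspose_symm_par (x : D) (M : V) :
    (rightTranspose cd x _ _).symm (par cd x M) = cd.i x M :=
  Equiv.symm_apply_apply _ _

lemma whiskerLeft_comp_par (x : D) {M N : V} (g : M ⟶ N) :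
    (ω.obj x ◁ g) ≫ par cd x N = par cd x M ≫ (cd.T.map g ▷ ω.obj x) := by
  rw [par_eq_rightTranspose, par_eq_rightTranspose, ← rightTranspose_comp, ← cd.nat x g,
    rightTranspose_whiskerRight_comp]

lemma whiskerRight_comp_par {x y : D} (f : x ⟶ y) (M : V) :
    (ω.map f ▷ M) ≫ par cd y M = par cd x M ≫ (cd.T.obj M ◁ ω.map f) := by
  rw [par_eq_rightTranspose, par_eq_rightTranspose, ← rightTranspose_whiskerRight_comp,
    cd.dinat f M, rightTranspose_whiskerLeft_dmap_comp]

lemma rightTranspose_symm_dinat {x y : D} (f : x ⟶ y) {M P : V}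
    (β₁ : ω.obj x ⊗ M ⟶ P ⊗ ω.obj x) (β₂ : ω.obj y ⊗ M ⟶ P ⊗ ω.obj y)
    (h : (ω.map f ▷ M) ≫ β₂ = β₁ ≫ (P ◁ ω.map f)) :
    ((ω.map f ▷ M) ▷ cd.dual y) ≫ (rightTranspose cd y _ _).symm β₂ =
      ((ω.obj x ⊗ M) ◁ cd.dmap f) ≫ (rightTranspose cd x _ _).symm β₁ := by
  rw [← rightTranspose_symm_comp, h, Equiv.symm_apply_eq, rightTranspose_whiskerLeft_dmap_comp,
    Equiv.apply_symm_apply]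

lemma whiskerLeft_d0_comp_ev :
    (ω.obj (𝟙_ D) ◁ cd.d0) ≫ cd.ev (𝟙_ D) = (ρ_ (ω.obj (𝟙_ D))).hom ≫ OplaxMonoidal.η ω := by
  have h := cd.d0_spec
  rw [MonoidalCategory.tensorHom_def, Category.assoc] at h
  rw [← cancel_epi (LaxMonoidal.ε ω ▷ 𝟙_ V), ← Category.assoc, ← Category.assoc,
    Category.assoc, h]
  simp [unitors_equal]

lemma whiskerLeft_d2_comp_ev (x y : D) :
    (ω.obj (x ⊗ y) ◁ cd.d2 x y) ≫ cd.ev (x ⊗ y) =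
      (OplaxMonoidal.δ ω x y ▷ (cd.dual y ⊗ cd.dual x)) ≫
        (α_ (ω.obj x) (ω.obj y) (cd.dual y ⊗ cd.dual x)).hom ≫
        (ω.obj x ◁ (α_ (ω.obj y) (cd.dual y) (cd.dual x)).inv) ≫
        (ω.obj x ◁ (cd.ev y ▷ cd.dual x)) ≫ (ω.obj x ◁ (λ_ (cd.dual x)).hom) ≫ cd.ev x := by
  rw [← cancel_epi (LaxMonoidal.μ ω x y ▷ (cd.dual y ⊗ cd.dual x)), cd.d2_spec,
    Functor.Monoidal.whiskerRight_μ_δ_assoc]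

lemma rightTranspose_symm_comp_of_counit {x : D} {P : V} (β : ω.obj x ⊗ 𝟙_ V ⟶ P ⊗ ω.obj x)
    (ε : P ⟶ 𝟙_ V) (h : β ≫ (ε ▷ ω.obj x) ≫ (λ_ (ω.obj x)).hom = (ρ_ (ω.obj x)).hom) :
    (rightTranspose cd x _ _).symm β ≫ ε = ((ρ_ (ω.obj x)).hom ▷ cd.dual x) ≫ cd.ev x := by
  have h' : β ≫ (ε ▷ ω.obj x) = (ρ_ (ω.obj x)).hom ≫ (λ_ (ω.obj x)).inv := by
    rw [← cancel_mono (λ_ (ω.obj x)).hom]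
    simpa using h
  rw [← rightTranspose_symm_comp_whiskerRight, h', rightTranspose_symm_apply]
  monoidal

lemma d0_comp_rightTranspose_symm {P M : V} (β : ω.obj (𝟙_ D) ⊗ M ⟶ P ⊗ ω.obj (𝟙_ D)) :
    (ρ_ (ω.obj (𝟙_ D) ⊗ M)).inv ≫ ((ω.obj (𝟙_ D) ⊗ M) ◁ cd.d0) ≫
      (rightTranspose cd (𝟙_ D) _ _).symm β = β ≫ (P ◁ OplaxMonoidal.η ω) ≫ (ρ_ P).hom := by
  rw [rightTranspose_symm_apply]
  calc _ = 𝟙 _ ⊗≫ ((ω.obj (𝟙_ D) ⊗ M) ◁ cd.d0 ≫ β ▷ cd.dual (𝟙_ D)) ⊗≫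
        P ◁ cd.ev (𝟙_ D) ⊗≫ 𝟙 _ := by monoidal
    _ = 𝟙 _ ⊗≫ β ▷ 𝟙_ V ⊗≫ P ◁ ((ω.obj (𝟙_ D) ◁ cd.d0) ≫ cd.ev (𝟙_ D)) ⊗≫ 𝟙 _ := by
        rw [whisker_exchange]; monoidal
    _ = _ := by rw [whiskerLeft_d0_comp_ev]; monoidal

lemma rightTranspose_symm_coaction_tensor (x : D) {M N P Q : V}
    (β₁ : ω.obj x ⊗ M ⟶ P ⊗ ω.obj x) (β₂ : ω.obj x ⊗ N ⟶ Q ⊗ ω.obj x) :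
    (rightTranspose cd x _ _).symm ((α_ (ω.obj x) M N).inv ≫ (β₁ ▷ N) ≫
      (α_ P (ω.obj x) N).hom ≫ (P ◁ β₂) ≫ (α_ P Q (ω.obj x)).inv) =
    𝟙 ((ω.obj x ⊗ (M ⊗ N)) ⊗ cd.dual x) ⊗≫
      ((ω.obj x ⊗ M) ◁ (cd.coev x ▷ (N ⊗ cd.dual x))) ⊗≫
      ((rightTranspose cd x _ _).symm β₁ ⊗ₘ (rightTranspose cd x _ _).symm β₂) := by
  rw [rightTranspose_symm_apply, rightTranspose_symm_apply, rightTranspose_symm_apply,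
    MonoidalCategory.tensorHom_def]
  calc _ = 𝟙 _ ⊗≫ β₁ ▷ (N ⊗ cd.dual x) ⊗≫
        P ◁ ((ω.obj x ◁ cd.coev x ⊗≫ cd.ev x ▷ ω.obj x) ▷ (N ⊗ cd.dual x)) ⊗≫
        P ◁ (β₂ ▷ cd.dual x) ⊗≫ P ◁ (Q ◁ cd.ev x) ⊗≫ 𝟙 _ := by
        rw [cd.zig'']; monoidal
    _ = 𝟙 _ ⊗≫ (β₁ ▷ (𝟙_ V ⊗ (N ⊗ cd.dual x)) ≫
          (P ⊗ ω.obj x) ◁ (cd.coev x ▷ (N ⊗ cd.dual x))) ⊗≫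
        P ◁ (cd.ev x ▷ (ω.obj x ⊗ (N ⊗ cd.dual x))) ⊗≫
        P ◁ (β₂ ▷ cd.dual x) ⊗≫ P ◁ (Q ◁ cd.ev x) ⊗≫ 𝟙 _ := by monoidal
    _ = _ := by rw [← whisker_exchange]; monoidal

-- Transposing both `ω x` and `ω y` matches the lift axiom for `⊗` with the equation of `μ`.
abbrev rightTranspose₂ (x y : D) (M R : V)
    (L : (ω.obj x ⊗ ω.obj y) ⊗ M ⟶ R ⊗ (ω.obj x ⊗ ω.obj y)) :
    (ω.obj x ⊗ ((ω.obj y ⊗ M) ⊗ cd.dual y)) ⊗ cd.dual x ⟶ R :=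
  (rightTranspose cd x _ _).symm ((α_ (ω.obj x) (ω.obj y ⊗ M) (cd.dual y)).inv ≫
    ((α_ (ω.obj x) (ω.obj y) M).inv ▷ cd.dual y) ≫
    (rightTranspose cd y _ _).symm (L ≫ (α_ R (ω.obj x) (ω.obj y)).inv))

lemma rightTranspose₂_injective (x y : D) (M R : V) :
    Function.Injective (rightTranspose₂ cd x y M R) := by
  intro L₁ L₂ h
  have h' := (rightTranspose cd x _ _).symm.injective h
  rw [cancel_epi, cancel_epi] at h'
  exact (cancel_mono _).1 ((rightTranspose cd y _ _).symm.injective h')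

lemma rightTranspose₂_eq (x y : D) (M R : V)
    (L : (ω.obj x ⊗ ω.obj y) ⊗ M ⟶ R ⊗ (ω.obj x ⊗ ω.obj y)) :
    rightTranspose₂ cd x y M R L = 𝟙 _ ⊗≫ L ▷ (cd.dual y ⊗ cd.dual x) ⊗≫
      R ◁ (ω.obj x ◁ (cd.ev y ▷ cd.dual x)) ⊗≫ R ◁ cd.ev x ⊗≫ 𝟙 _ := by
  rw [rightTranspose₂, rightTranspose_symm_apply, rightTranspose_symm_apply]
  monoidal

lemma rightTranspose₂_coaction_comp_mul (x y : D) {M P Q R : V}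
    (γ : ω.obj y ⊗ M ⟶ P ⊗ ω.obj y) (γ' : ω.obj x ⊗ P ⟶ Q ⊗ ω.obj x) (m : Q ⟶ R) :
    ((ω.obj x ◁ (rightTranspose cd y _ _).symm γ) ▷ cd.dual x) ≫
        (rightTranspose cd x _ _).symm γ' ≫ m =
      rightTranspose₂ cd x y M R ((α_ (ω.obj x) (ω.obj y) M).hom ≫ (ω.obj x ◁ γ) ≫
        (α_ (ω.obj x) P (ω.obj y)).inv ≫ (γ' ▷ ω.obj y) ≫ ((m ▷ ω.obj x) ▷ ω.obj y) ≫
        (α_ R (ω.obj x) (ω.obj y)).hom) := by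
  rw [rightTranspose_symm_apply, rightTranspose_symm_apply, rightTranspose₂_eq]
  calc _ = 𝟙 _ ⊗≫ ω.obj x ◁ (γ ▷ cd.dual y) ▷ cd.dual x ⊗≫
        (((ω.obj x ⊗ P) ◁ cd.ev y ≫ γ' ▷ 𝟙_ V) ▷ cd.dual x) ⊗≫
        Q ◁ cd.ev x ⊗≫ m := by monoidal
    _ = 𝟙 _ ⊗≫ ω.obj x ◁ (γ ▷ cd.dual y) ▷ cd.dual x ⊗≫
        γ' ▷ ((ω.obj y ⊗ cd.dual y) ⊗ cd.dual x) ⊗≫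
        (Q ◁ ((ω.obj x ◁ (cd.ev y ▷ cd.dual x)) ≫ (ω.obj x ◁ (λ_ (cd.dual x)).hom) ≫
          cd.ev x) ≫ m ▷ 𝟙_ V) ⊗≫ 𝟙 _ := by rw [whisker_exchange]; monoidal
    _ = _ := by rw [whisker_exchange]; monoidal

lemma rightTranspose₂_coaction_tensorObj (x y : D) {M R : V}
    (Γ : ω.obj (x ⊗ y) ⊗ M ⟶ R ⊗ ω.obj (x ⊗ y)) :
    rightTranspose₂ cd x y M R ((LaxMonoidal.μ ω x y ▷ M) ≫ Γ ≫ (R ◁ OplaxMonoidal.δ ω x y)) =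
      (𝟙 ((ω.obj x ⊗ ((ω.obj y ⊗ M) ⊗ cd.dual y)) ⊗ cd.dual x) ⊗≫
        ((LaxMonoidal.μ ω x y ▷ M) ▷ (cd.dual y ⊗ cd.dual x))) ≫
        ((ω.obj (x ⊗ y) ⊗ M) ◁ cd.d2 x y) ≫ (rightTranspose cd (x ⊗ y) _ _).symm Γ := by
  rw [rightTranspose_symm_apply, rightTranspose₂_eq]
  calc _ = 𝟙 _ ⊗≫ (LaxMonoidal.μ ω x y ▷ M) ▷ (cd.dual y ⊗ cd.dual x) ⊗≫
        Γ ▷ (cd.dual y ⊗ cd.dual x) ⊗≫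
        R ◁ ((ω.obj (x ⊗ y) ◁ cd.d2 x y) ≫ cd.ev (x ⊗ y)) ⊗≫ 𝟙 _ := by
        rw [whiskerLeft_d2_comp_ev]; monoidal
    _ = 𝟙 _ ⊗≫ (LaxMonoidal.μ ω x y ▷ M) ▷ (cd.dual y ⊗ cd.dual x) ⊗≫
        ((ω.obj (x ⊗ y) ⊗ M) ◁ cd.d2 x y ≫ Γ ▷ cd.dual (x ⊗ y)) ⊗≫
        R ◁ cd.ev (x ⊗ y) ⊗≫ 𝟙 _ := by rw [whisker_exchange]; monoidal
    _ = _ := by monoidal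

theorem par_isComodLift {μT : ∀ M : V, cd.T.obj (cd.T.obj M) ⟶ cd.T.obj M}
    {ηT : ∀ M : V, M ⟶ cd.T.obj M} {δT : ∀ M N : V, cd.T.obj (M ⊗ N) ⟶ cd.T.obj M ⊗ cd.T.obj N}
    {εT : cd.T.obj (𝟙_ V) ⟶ 𝟙_ V} (hμ : MuEq cd μT) (hη : EtaEq cd ηT) (hδ : DeltaEq cd δT)
    (hε : EpsEq cd εT) : IsComodLift cd.T μT ηT δT εT (par cd) where
  nat_M := whiskerLeft_comp_par cd
  nat_x := whiskerRight_comp_par cd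
  comod_tensor x M N := by
    apply (rightTranspose cd x _ _).symm.injective
    rw [rightTranspose_symm_comp_whiskerRight, rightTranspose_symm_coaction_tensor,
      rightTranspose_symm_par, rightTranspose_symm_par, rightTranspose_symm_par, hδ x M N]
  comod_unit x := by
    rw [par_eq_rightTranspose, ← Category.assoc, ← rightTranspose_comp, hε x,
      rightTranspose_whiskerRight_comp, rightTranspose_ev]
    simp
  lift_tensor x y M := by
    apply rightTranspose₂_injective cd x y M (cd.T.obj M)
    rw [← rightTranspose₂_coaction_comp_mul, rightTranspose₂_coaction_tensorObj,
      rightTranspose_symm_par, rightTranspose_symm_par, rightTranspose_symm_par]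
    exact hμ x y M
  lift_unit M := by
    rw [hη M, ← d0_comp_rightTranspose_symm, rightTranspose_symm_par]

noncomputable def ConstructionData.desc_s7 (M N : V) (f : ∀ x : D, (ω.obj x ⊗ M) ⊗ cd.dual x ⟶ N)
    (hf : ∀ {x y : D} (h : x ⟶ y),
      ((ω.map h ▷ M) ▷ cd.dual y) ≫ f y = ((ω.obj x ⊗ M) ◁ cd.dmap h) ≫ f x) :
    cd.T.obj M ⟶ N :=
  (cd.universal M N f hf).exists.choose

lemma ConstructionData.i_desc_s7 (M N : V) (f : ∀ x : D, (ω.obj x ⊗ M) ⊗ cd.dual x ⟶ N)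
    (hf : ∀ {x y : D} (h : x ⟶ y),
      ((ω.map h ▷ M) ▷ cd.dual y) ≫ f y = ((ω.obj x ⊗ M) ◁ cd.dmap h) ≫ f x) (x : D) :
    cd.i x M ≫ cd.desc_s7 M N f hf = f x :=
  (cd.universal M N f hf).exists.choose_spec x

section ClassifyingMap

variable {T' : V ⥤ V} {β : ∀ (x : D) (M : V), ω.obj x ⊗ M ⟶ T'.obj M ⊗ ω.obj x}
  (hβ : ∀ {x y : D} (f : x ⟶ y) (M : V), (ω.map f ▷ M) ≫ β y M = β x M ≫ (T'.obj M ◁ ω.map f))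

noncomputable def classifyingMap (M : V) : cd.T.obj M ⟶ T'.obj M :=
  cd.desc_s7 M (T'.obj M) (fun x => (rightTranspose cd x _ _).symm (β x M))
    (fun f => rightTranspose_symm_dinat cd f _ _ (hβ f M))

lemma i_classifyingMap (x : D) (M : V) :
    cd.i x M ≫ classifyingMap cd hβ M = (rightTranspose cd x _ _).symm (β x M) :=
  cd.i_desc_s7 _ _ _ (fun f => rightTranspose_symm_dinat cd f _ _ (hβ f M)) x

lemma par_comp_classifyingMap (x : D) (M : V) :
    par cd x M ≫ (classifyingMap cd hβ M ▷ ω.obj x) = β x M := by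
  rw [par_eq_rightTranspose, ← rightTranspose_comp, i_classifyingMap, Equiv.apply_symm_apply]

lemma eq_classifyingMap {φ : ∀ M : V, cd.T.obj M ⟶ T'.obj M}
    (h : ∀ (x : D) (M : V), β x M = par cd x M ≫ (φ M ▷ ω.obj x)) :
    φ = classifyingMap cd hβ := by
  funext M
  refine cd.hom_ext_s7 fun x => ?_
  rw [i_classifyingMap, h x M, par_eq_rightTranspose, ← rightTranspose_comp,
    Equiv.symm_apply_apply]

lemma classifyingMap_naturality
    (hnat : ∀ (x : D) {M N : V} (g : M ⟶ N),
      (ω.obj x ◁ g) ≫ β x N = β x M ≫ (T'.map g ▷ ω.obj x)) {M N : V} (f : M ⟶ N) :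
    cd.T.map f ≫ classifyingMap cd hβ N = classifyingMap cd hβ M ≫ T'.map f := by
  refine cd.hom_ext_s7 fun x => ?_
  rw [← reassoc_of% (cd.nat x f), i_classifyingMap, reassoc_of% (i_classifyingMap cd hβ x M),
    ← rightTranspose_symm_comp, hnat x f, rightTranspose_symm_comp_whiskerRight]

lemma classifyingMap_mul {μT : ∀ M : V, cd.T.obj (cd.T.obj M) ⟶ cd.T.obj M} (hμ : MuEq cd μT)
    {μ' : ∀ M : V, T'.obj (T'.obj M) ⟶ T'.obj M}
    (hlift : ∀ (x y : D) (M : V),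
      (α_ (ω.obj x) (ω.obj y) M).hom ≫ (ω.obj x ◁ β y M) ≫
        (α_ (ω.obj x) (T'.obj M) (ω.obj y)).inv ≫ (β x (T'.obj M) ▷ ω.obj y) ≫
        ((μ' M ▷ ω.obj x) ▷ ω.obj y) ≫ (α_ (T'.obj M) (ω.obj x) (ω.obj y)).hom =
      (LaxMonoidal.μ ω x y ▷ M) ≫ β (x ⊗ y) M ≫ (T'.obj M ◁ OplaxMonoidal.δ ω x y))
    (M : V) :
    μT M ≫ classifyingMap cd hβ M =
      cd.T.map (classifyingMap cd hβ M) ≫ classifyingMap cd hβ (T'.obj M) ≫ μ' M := by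
  refine cd.hom_ext_s7 fun x => cd.whisker_hom_ext x fun y => ?_
  calc ((ω.obj x ◁ cd.i y M) ▷ cd.dual x) ≫ cd.i x (cd.T.obj M) ≫ μT M ≫ classifyingMap cd hβ M
      = rightTranspose₂ cd x y M (T'.obj M)
          ((LaxMonoidal.μ ω x y ▷ M) ≫ β (x ⊗ y) M ≫ (T'.obj M ◁ OplaxMonoidal.δ ω x y)) := by
        rw [reassoc_of% (hμ x y M), i_classifyingMap, rightTranspose₂_coaction_tensorObj]
    _ = _ := by
        rw [← hlift, ← rightTranspose₂_coaction_comp_mul, ← i_classifyingMap cd hβ,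
          ← i_classifyingMap cd hβ, ← reassoc_of% (cd.nat x (classifyingMap cd hβ M))]
        simp only [MonoidalCategory.whiskerLeft_comp, comp_whiskerRight, Category.assoc]

lemma classifyingMap_unit {ηT : ∀ M : V, M ⟶ cd.T.obj M} (hη : EtaEq cd ηT)
    {η' : ∀ M : V, M ⟶ T'.obj M}
    (hunit : ∀ M : V, (λ_ M).inv ≫ (LaxMonoidal.ε ω ▷ M) ≫ β (𝟙_ D) M ≫
      (T'.obj M ◁ OplaxMonoidal.η ω) ≫ (ρ_ (T'.obj M)).hom = η' M) (M : V) :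
    ηT M ≫ classifyingMap cd hβ M = η' M := by
  simp only [hη M, Category.assoc]
  rw [i_classifyingMap, d0_comp_rightTranspose_symm, hunit M]

lemma classifyingMap_comul {δT : ∀ M N : V, cd.T.obj (M ⊗ N) ⟶ cd.T.obj M ⊗ cd.T.obj N}
    (hδ : DeltaEq cd δT) {δ' : ∀ M N : V, T'.obj (M ⊗ N) ⟶ T'.obj M ⊗ T'.obj N}
    (htensor : ∀ (x : D) (M N : V), β x (M ⊗ N) ≫ (δ' M N ▷ ω.obj x) =
      (α_ (ω.obj x) M N).inv ≫ (β x M ▷ N) ≫ (α_ (T'.obj M) (ω.obj x) N).hom ≫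
        (T'.obj M ◁ β x N) ≫ (α_ (T'.obj M) (T'.obj N) (ω.obj x)).inv) (M N : V) :
    δT M N ≫ (classifyingMap cd hβ M ⊗ₘ classifyingMap cd hβ N) =
      classifyingMap cd hβ (M ⊗ N) ≫ δ' M N := by
  refine cd.hom_ext_s7 fun x => ?_
  calc cd.i x (M ⊗ N) ≫ δT M N ≫ (classifyingMap cd hβ M ⊗ₘ classifyingMap cd hβ N)
      = 𝟙 _ ⊗≫ ((ω.obj x ⊗ M) ◁ (cd.coev x ▷ (N ⊗ cd.dual x))) ⊗≫
          ((cd.i x M ≫ classifyingMap cd hβ M) ⊗ₘ (cd.i x N ≫ classifyingMap cd hβ N)) := by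
        rw [reassoc_of% (hδ x M N)]
        simp only [monoidalComp, Category.assoc, tensorHom_comp_tensorHom]
    _ = (rightTranspose cd x _ _).symm (β x (M ⊗ N) ≫ (δ' M N ▷ ω.obj x)) := by
        rw [htensor, rightTranspose_symm_coaction_tensor, i_classifyingMap, i_classifyingMap]
    _ = _ := by
        rw [rightTranspose_symm_comp_whiskerRight, ← i_classifyingMap cd hβ, Category.assoc]

lemma classifyingMap_counit {εT : cd.T.obj (𝟙_ V) ⟶ 𝟙_ V} (hε : EpsEq cd εT)
    {ε' : T'.obj (𝟙_ V) ⟶ 𝟙_ V}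
    (hcounit : ∀ x : D,
      β x (𝟙_ V) ≫ (ε' ▷ ω.obj x) ≫ (λ_ (ω.obj x)).hom = (ρ_ (ω.obj x)).hom) :
    εT = classifyingMap cd hβ (𝟙_ V) ≫ ε' := by
  refine cd.hom_ext_s7 fun x => ?_
  rw [hε x, ← Category.assoc, i_classifyingMap,
    rightTranspose_symm_comp_of_counit cd _ _ (hcounit x)]

end ClassifyingMap

/-- The family `x ↦ (ω x, ∂_x)` defines a strong monoidal lift
`ω̃ : D ⥤ Comod_T` of `ω`, and the pair `(T, ω̃)` is universal among bimonads `T'`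
equipped with such a lift: for any bimonad `(T', μ', η', δ', ε')` on `V` and any lift
`β` of `ω` to `Comod_{T'}`, there is a unique morphism of bimonads `φ : T ⟶ T'` with
`β x M = (φ_M ⊗ id) ∘ ∂_x M` for all `x, M`. -/
theorem comodLift_universal
    [∀ X : V, Limits.PreservesColimits (tensorLeft X)]
    [∀ X : V, Limits.PreservesColimits (tensorRight X)] :
    -- `x ↦ (ω x, ∂ x)` is a lift of `ω` to `Comod_T`:
    IsComodLift fd.cd.T fd.μT fd.ηT fd.δT fd.εT (par fd.cd) ∧
    -- and it is universal:
    ∀ (T' : V ⥤ V)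
      (μ' : ∀ M : V, T'.obj (T'.obj M) ⟶ T'.obj M)
      (η' : ∀ M : V, M ⟶ T'.obj M)
      (δ' : ∀ M N : V, T'.obj (M ⊗ N) ⟶ T'.obj M ⊗ T'.obj N)
      (ε' : T'.obj (𝟙_ V) ⟶ 𝟙_ V),
      IsBimonadFam T' μ' η' δ' ε' →
      ∀ β : ∀ (x : D) (M : V), ω.obj x ⊗ M ⟶ T'.obj M ⊗ ω.obj x,
        IsComodLift T' μ' η' δ' ε' β →
        ∃! φ : ∀ M : V, fd.cd.T.obj M ⟶ T'.obj M,
          -- `φ` is natural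
          (∀ {M N : V} (f : M ⟶ N), fd.cd.T.map f ≫ φ N = φ M ≫ T'.map f) ∧
          -- `φ` is a morphism of monads
          (∀ M : V, fd.μT M ≫ φ M =
            fd.cd.T.map (φ M) ≫ φ (T'.obj M) ≫ μ' M) ∧
          (∀ M : V, fd.ηT M ≫ φ M = η' M) ∧
          -- `φ` is comonoidal
          (∀ M N : V, fd.δT M N ≫ (φ M ⊗ₘ φ N) = φ (M ⊗ N) ≫ δ' M N) ∧
          (fd.εT = φ (𝟙_ V) ≫ ε') ∧
          -- `φ` intertwines the lifts, i.e. `ω' = φ_♯ ∘ ω̃`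
          (∀ (x : D) (M : V), β x M = par fd.cd x M ≫ (φ M ▷ ω.obj x)) := by
  refine ⟨par_isComodLift fd.cd fd.hμ fd.hη fd.hδ fd.hε, fun T' μ' η' δ' ε' _ β hβ => ?_⟩
  refine ⟨classifyingMap fd.cd hβ.nat_x, ⟨?_, ?_, ?_, ?_, ?_, ?_⟩,
    fun φ hφ => eq_classifyingMap fd.cd hβ.nat_x hφ.2.2.2.2.2⟩
  · exact classifyingMap_naturality fd.cd hβ.nat_x hβ.nat_M
  · exact classifyingMap_mul fd.cd hβ.nat_x fd.hμ hβ.lift_tensor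
  · exact classifyingMap_unit fd.cd hβ.nat_x fd.hη hβ.lift_unit
  · exact classifyingMap_comul fd.cd hβ.nat_x fd.hδ hβ.comod_tensor
  · exact classifyingMap_counit fd.cd hβ.nat_x fd.hε hβ.comod_unit
  · exact fun x M => (par_comp_classifyingMap fd.cd hβ.nat_x x M).symm

end CData
end
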